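/- (Stationary UL Cholesky of Schur complements of a positive Toeplitz operator.) Let T_Q = (Q_{i-j})_{i,j≥0} ≥ 0 on ℓ²_H(ℕ₀). Then there exist operators F_0, F_1, F_2, … with F_i : H → closure(ran F_0) ⊆ H such that for every m ≥ 0, the Schur complement S(m) of T_Q on {0,…,m} factors as S(m) = L_m* L_m, where L_m is the (m+1)×(m+1) lower triangular Toeplitz matrix with F_0 on the diagonal, F_1 on the first subdiagonal, …, F_m in the lower-left corner. -/

import Mathlib

/-!
Positivity of `T_Q` gives a Kolmogorov decomposition `Q_{i-j} = ι₀† V†ⁱ Vʲ ι₀`: `K` is the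
reproducing kernel Hilbert space of the kernel `(i, j) ↦ Q_{i-j}`, the vectors `Vʲ ι₀ x` are its
kernel functions, which span a dense subspace, and `V` is an isometry because the kernel is
Toeplitz. For `u = ∑_{j ≤ m} Vʲ ι₀ v_j` and any tail `y`,
`‖u + V^{m+1} y‖² = ‖u‖² - ‖V†^{m+1} u‖² + ‖V†^{m+1} u + y‖²`, so by density the Schur complement
form is `‖u‖² - ‖V†^{m+1} u‖²`. Telescoping with the projection `D = 1 - V V†` rewrites this as
`∑_{k ≤ m} ‖D V†ᵏ u‖² = ∑_{k ≤ m} ‖∑_{j ≤ k} G_{k-j} v_j‖²` with `G_r = D V†ʳ ι₀`, which is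
`‖L v‖²` for the lower triangular Toeplitz matrix `L` with entries `G_r`. Finally `ran D` lies in
`closure (ran G₀)`, and a partial isometry `U` with `U G₀ = |G₀|` moves everything into `H`:
`F_r = U G_r`.
-/

open scoped InnerProductSpace
open ContinuousLinearMap

section

variable {H : Type*} [NormedAddCommGroup H] [InnerProductSpace ℂ H] [CompleteSpace H]

/-- The quadratic form of the block Toeplitz matrix `(Q_{i-j})_{i,j≥0}` on vectors
supported in `{0,…,N-1}`. -/
noncomputable def toepQF (Q : ℤ → H →L[ℂ] H) (N : ℕ) (v : ℕ → H) : ℝ :=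
  ∑ i ∈ Finset.range N, ∑ j ∈ Finset.range N, (⟪Q ((i : ℤ) - (j : ℤ)) (v j), v i⟫_ℂ).re

/-- The block Toeplitz matrix `(Q_{i-j})_{i,j≥0}` is (hermitian and) positive
semidefinite on finitely supported sequences. -/
def ToepPos (Q : ℤ → H →L[ℂ] H) : Prop :=
  (∀ k : ℤ, Q (-k) = (Q k).adjoint) ∧ ∀ N v, 0 ≤ toepQF Q N v

/-- The quadratic form of a block matrix supported on `{0,…,m} × {0,…,m}`. -/
noncomputable def schurQF (m : ℕ) (S : ℕ → ℕ → H →L[ℂ] H) (v : ℕ → H) : ℝ :=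
  ∑ i ∈ Finset.range (m + 1), ∑ j ∈ Finset.range (m + 1), (⟪S i j (v j), v i⟫_ℂ).re

/-- `S` is the Schur complement `S(m)` of the positive Toeplitz operator `T_Q` supported
on rows and columns `{0,…,m}`: the maximal positive operator matrix supported there
with `T_Q - S ≥ 0`. -/
def IsSchurToep (Q : ℤ → H →L[ℂ] H) (m : ℕ) (S : ℕ → ℕ → H →L[ℂ] H) : Prop :=
  (∀ i j, m < i ∨ m < j → S i j = 0) ∧ (∀ i j, (S i j).adjoint = S j i) ∧
    (∀ v, 0 ≤ schurQF m S v) ∧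
    (∀ N (v : ℕ → H), (∀ k, N ≤ k → v k = 0) → schurQF m S v ≤ toepQF Q N v) ∧
    ∀ X : ℕ → ℕ → H →L[ℂ] H, (∀ i j, m < i ∨ m < j → X i j = 0) →
      (∀ i j, (X i j).adjoint = X j i) → (∀ v, 0 ≤ schurQF m X v) →
      (∀ N (v : ℕ → H), (∀ k, N ≤ k → v k = 0) → schurQF m X v ≤ toepQF Q N v) →
      ∀ v, schurQF m X v ≤ schurQF m S v

set_option linter.unusedSectionVars false

section PartialIsometry

open UniformSpace

theorem ContinuousLinearMap.norm_fromCompletion_apply {E X : Type*} [SeminormedAddCommGroup E]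
    [NormedSpace ℂ E] [NormedAddCommGroup X] [NormedSpace ℂ X] [CompleteSpace X]
    (f : E →L[ℂ] X) (hf : ∀ x, ‖f x‖ = ‖x‖) (z : Completion E) :
    ‖f.fromCompletion z‖ = ‖z‖ :=
  Completion.induction_on z
    (isClosed_eq (continuous_norm.comp f.fromCompletion.continuous) continuous_norm)
    fun x => by rw [fromCompletion_apply_coe, hf, Completion.norm_coe]

variable {E₀ F G : Type*} [AddCommGroup E₀] [Module ℂ E₀]
  [NormedAddCommGroup F] [InnerProductSpace ℂ F] [CompleteSpace F]
  [NormedAddCommGroup G] [InnerProductSpace ℂ G] [CompleteSpace G]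

theorem exists_comp_eq_of_norm_eq (A : E₀ →ₗ[ℂ] F) (B : E₀ →ₗ[ℂ] G)
    (h : ∀ x, ‖A x‖ = ‖B x‖) :
    ∃ U : F →L[ℂ] G, (∀ x, U (A x) = B x) ∧
      ∀ z ∈ (LinearMap.range A).topologicalClosure, ‖U z‖ = ‖z‖ := by
  -- `U = β α†`, where `α` and `β` extend `A` and `B` to the completion of `E₀` for `‖A ·‖`.
  let _ : SeminormedAddCommGroup E₀ := .induced E₀ F A
  let _ : InnerProductSpace ℂ E₀ := .induced A
  let α := (A.mkContinuous 1 fun x => by rw [one_mul]; rfl).fromCompletion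
  let β := (B.mkContinuous 1 fun x => by rw [one_mul, ← h]; rfl).fromCompletion
  have hα : adjoint α ∘L α = 1 :=
    (norm_map_iff_adjoint_comp_self _).1 (norm_fromCompletion_apply _ fun _ => rfl)
  have hαA : ∀ x, adjoint α (A x) = x := fun x => by
    simpa [α] using congr($hα (x : Completion E₀))
  let U := β ∘L adjoint α
  refine ⟨U, fun x => by simp [U, β, hαA], fun z hz => ?_⟩
  rw [← SetLike.mem_coe, Submodule.topologicalClosure_coe, LinearMap.coe_range] at hz
  refine closure_minimal (t := {z | ‖U z‖ = ‖z‖}) ?_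
    (isClosed_eq (continuous_norm.comp U.continuous) continuous_norm) hz
  rintro _ ⟨x, rfl⟩
  simp [U, β, hαA, ← h]

theorem norm_sqrt_adjoint_comp_self_apply {E : Type*} [NormedAddCommGroup E]
    [InnerProductSpace ℂ E] [CompleteSpace E] (A : E →L[ℂ] F) (x : E) :
    ‖CFC.sqrt (adjoint A ∘L A) x‖ = ‖A x‖ := by
  have hA : 0 ≤ adjoint A ∘L A := (nonneg_iff_isPositive _).2 (isPositive_adjoint_comp_self A)
  have hB : adjoint (CFC.sqrt (adjoint A ∘L A)) = CFC.sqrt (adjoint A ∘L A) :=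
    (IsSelfAdjoint.of_nonneg (CFC.sqrt_nonneg _)).adjoint_eq
  refine (sq_eq_sq₀ (norm_nonneg _) (norm_nonneg _)).1 ?_
  rw [apply_norm_sq_eq_inner_adjoint_left, apply_norm_sq_eq_inner_adjoint_left, hB,
    ← mul_def, CFC.sqrt_mul_sqrt_self _ hA]

end PartialIsometry

section FinsuppSum

variable {ι E F G : Type*} [NormedAddCommGroup E] [NormedSpace ℂ E]
  [NormedAddCommGroup F] [InnerProductSpace ℂ F] [NormedAddCommGroup G] [InnerProductSpace ℂ G]

theorem norm_sum_sq_eq_sum_re_inner (s : Finset ℕ) (a : ℕ → F) :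
    ‖∑ j ∈ s, a j‖ ^ 2 = ∑ i ∈ s, ∑ j ∈ s, (⟪a j, a i⟫_ℂ).re := by
  rw [← inner_self_eq_norm_sq (𝕜 := ℂ), sum_inner, RCLike.re_to_complex, Complex.re_sum,
    Finset.sum_comm]
  simp only [inner_sum, Complex.re_sum]

theorem norm_lsum_eq_of_inner_eq (a : ι → E →L[ℂ] F) (b : ι → E →L[ℂ] G)
    (h : ∀ i j x y, ⟪a i x, a j y⟫_ℂ = ⟪b i x, b j y⟫_ℂ) (f : ι →₀ E) :
    ‖Finsupp.lsum ℂ (fun i => (a i : E →ₗ[ℂ] F)) f‖ =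
      ‖Finsupp.lsum ℂ (fun i => (b i : E →ₗ[ℂ] G)) f‖ := by
  simp only [norm_eq_sqrt_re_inner (𝕜 := ℂ), Finsupp.lsum_apply, Finsupp.sum_inner,
    Finsupp.inner_sum, coe_coe, h]

theorem topologicalClosure_range_lsum_eq_top (a : ι → E →L[ℂ] F)
    (ha : (Submodule.span ℂ {z | ∃ i x, a i x = z}).topologicalClosure = ⊤) :
    (LinearMap.range (Finsupp.lsum ℂ fun i => (a i : E →ₗ[ℂ] F))).topologicalClosure = ⊤ := by
  rw [eq_top_iff, ← ha]
  exact Submodule.topologicalClosure_mono <| Submodule.span_le.2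
    fun _ ⟨i, x, hz⟩ => ⟨Finsupp.single i x, by rw [Finsupp.lsum_single]; exact hz⟩

end FinsuppSum

section Isometry

theorem pow_mul_pow_of_mul_eq_one_of_le {M : Type*} [Monoid M] {a b : M} (h : a * b = 1)
    {k j : ℕ} (hkj : k ≤ j) : a ^ k * b ^ j = b ^ (j - k) := by
  rw [← Nat.add_sub_cancel' hkj, pow_add, ← mul_assoc, pow_mul_pow_eq_one k h, one_mul,
    Nat.add_sub_cancel_left]

theorem pow_mul_pow_of_mul_eq_one_of_ge {M : Type*} [Monoid M] {a b : M} (h : a * b = 1)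
    {k j : ℕ} (hjk : j ≤ k) : a ^ k * b ^ j = a ^ (k - j) := by
  rw [← Nat.sub_add_cancel hjk, pow_add, mul_assoc, pow_mul_pow_eq_one j h, mul_one,
    Nat.add_sub_cancel]

variable {K : Type*} [NormedAddCommGroup K] [InnerProductSpace ℂ K] [CompleteSpace K]

theorem ContinuousLinearMap.adjoint_pow (V : K →L[ℂ] K) (n : ℕ) :
    adjoint (V ^ n) = adjoint V ^ n := by
  rw [← star_eq_adjoint, ← star_eq_adjoint, star_pow]

theorem norm_add_apply_sq {P : K →L[ℂ] K} (hP : adjoint P * P = 1) (u y : K) :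
    ‖u + P y‖ ^ 2 = ‖u‖ ^ 2 - ‖adjoint P u‖ ^ 2 + ‖adjoint P u + y‖ ^ 2 := by
  have hPy : ‖P y‖ = ‖y‖ := (norm_map_iff_adjoint_comp_self P).2 hP y
  rw [norm_add_sq (𝕜 := ℂ), norm_add_sq (𝕜 := ℂ), ← adjoint_inner_left, hPy]
  ring

noncomputable def defectProj (V : K →L[ℂ] K) : K →L[ℂ] K := 1 - V * adjoint V

variable {V : K →L[ℂ] K}

theorem adjoint_mul_defectProj (hV : adjoint V * V = 1) : adjoint V * defectProj V = 0 := by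
  rw [defectProj, mul_sub, mul_one, ← mul_assoc, hV, one_mul, sub_self]

theorem defectProj_mul_pow (hV : adjoint V * V = 1) {j : ℕ} (hj : j ≠ 0) :
    defectProj V * V ^ j = 0 := by
  rw [← Nat.succ_pred_eq_of_ne_zero hj, pow_succ', ← mul_assoc, defectProj, sub_mul, one_mul,
    mul_assoc, hV, mul_one, sub_self, zero_mul]

theorem norm_sq_eq_norm_defectProj_sq_add (hV : adjoint V * V = 1) (z : K) :
    ‖z‖ ^ 2 = ‖defectProj V z‖ ^ 2 + ‖adjoint V z‖ ^ 2 := by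
  have hz : z = defectProj V z + V (adjoint V z) := by simp [defectProj]
  have hD : adjoint V (defectProj V z) = 0 := by
    rw [← mul_apply_eq_comp, adjoint_mul_defectProj hV, zero_apply]
  conv_lhs => rw [hz, norm_add_apply_sq hV, hD, zero_add, norm_zero]
  ring

theorem sum_norm_defectProj_adjoint_pow_sq (hV : adjoint V * V = 1) (n : ℕ) (z : K) :
    ∑ k ∈ Finset.range n, ‖defectProj V ((adjoint V ^ k) z)‖ ^ 2 =
      ‖z‖ ^ 2 - ‖(adjoint V ^ n) z‖ ^ 2 := by
  induction n with
  | zero => simp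
  | succ n ih =>
    rw [Finset.sum_range_succ, ih, norm_sq_eq_norm_defectProj_sq_add hV ((adjoint V ^ n) z),
      pow_succ' (adjoint V) n, mul_apply_eq_comp]
    ring

end Isometry

section LowerToeplitz

variable {G : Type*} [NormedAddCommGroup G] [InnerProductSpace ℂ G] [CompleteSpace G]

/-- The entries of `L_m† L_m`, where `L_m` is the lower triangular Toeplitz matrix with symbol
`F 0 + F 1 z + ⋯ + F m zᵐ`. -/
noncomputable def lowerToeplitzGram (F : ℕ → H →L[ℂ] G) (m : ℕ) : ℕ → ℕ → H →L[ℂ] H :=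
  fun i j => if i ≤ m ∧ j ≤ m then
    ∑ k ∈ Finset.Icc (max i j) m, adjoint (F (k - i)) ∘L F (k - j) else 0

theorem adjoint_lowerToeplitzGram (F : ℕ → H →L[ℂ] G) (m i j : ℕ) :
    adjoint (lowerToeplitzGram F m i j) = lowerToeplitzGram F m j i := by
  unfold lowerToeplitzGram
  by_cases h : i ≤ m ∧ j ≤ m
  · rw [if_pos h, if_pos h.symm, map_sum, max_comm]
    simp only [adjoint_comp, adjoint_adjoint]
  · rw [if_neg h, if_neg (by tauto), map_zero]

theorem schurQF_lowerToeplitzGram (F : ℕ → H →L[ℂ] G) (m : ℕ) (v : ℕ → H) :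
    schurQF m (lowerToeplitzGram F m) v =
      ∑ k ∈ Finset.range (m + 1), ‖∑ j ∈ Finset.range (k + 1), F (k - j) (v j)‖ ^ 2 := by
  simp only [norm_sum_sq_eq_sum_re_inner]
  calc schurQF m (lowerToeplitzGram F m) v
      = ∑ i ∈ Finset.range (m + 1), ∑ j ∈ Finset.range (m + 1),
          ∑ k ∈ Finset.Icc (max i j) m, (⟪F (k - j) (v j), F (k - i) (v i)⟫_ℂ).re := by
        refine Finset.sum_congr rfl fun i hi => Finset.sum_congr rfl fun j hj => ?_
        rw [Finset.mem_range] at hi hj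
        simp only [lowerToeplitzGram, if_pos (show i ≤ m ∧ j ≤ m by omega), sum_apply, sum_inner,
          comp_apply, adjoint_inner_left, Complex.re_sum]
    _ = ∑ i ∈ Finset.range (m + 1), ∑ k ∈ Finset.Icc i m, ∑ j ∈ Finset.range (k + 1),
          (⟪F (k - j) (v j), F (k - i) (v i)⟫_ℂ).re :=
        Finset.sum_congr rfl fun i _ => Finset.sum_comm' fun j k => by
          simp only [Finset.mem_range, Finset.mem_Icc]; omega
    _ = _ := Finset.sum_comm' fun i k => by simp only [Finset.mem_range, Finset.mem_Icc]; omega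

theorem schurQF_congr {m : ℕ} (X : ℕ → ℕ → H →L[ℂ] H) {v v' : ℕ → H}
    (h : ∀ k ≤ m, v k = v' k) : schurQF m X v = schurQF m X v' :=
  Finset.sum_congr rfl fun i hi => Finset.sum_congr rfl fun j hj => by
    rw [Finset.mem_range] at hi hj
    rw [h i (by omega), h j (by omega)]

end LowerToeplitz

section Dilation

variable {K : Type*} [NormedAddCommGroup K] [InnerProductSpace ℂ K] [CompleteSpace K]
  (V : K →L[ℂ] K) (ι₀ : H →L[ℂ] K)

noncomputable def orbitSum (n : ℕ) (v : ℕ → H) : K :=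
  ∑ j ∈ Finset.range n, (V ^ j) (ι₀ (v j))

def orbitSpan : Submodule ℂ K := Submodule.span ℂ {z | ∃ (j : ℕ) (x : H), (V ^ j) (ι₀ x) = z}

/-- The quadratic form of the Schur complement of `T_Q` on `{0,…,n-1}` when
`Q_{i-j} = ι₀† V†ⁱ Vʲ ι₀`. -/
noncomputable def schurForm (n : ℕ) (v : ℕ → H) : ℝ :=
  ‖orbitSum V ι₀ n v‖ ^ 2 - ‖(adjoint V ^ n) (orbitSum V ι₀ n v)‖ ^ 2

/-- Modulo the unitary part of the Wold decomposition of `V`, `ι₀ = ∑ʳ Vʳ ∘ woldCoeff V ι₀ r`. -/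
noncomputable def woldCoeff (r : ℕ) : H →L[ℂ] K := (defectProj V * adjoint V ^ r).comp ι₀

variable {V ι₀} {Q : ℤ → H →L[ℂ] H}

theorem orbitSum_add (n N : ℕ) (v : ℕ → H) :
    orbitSum V ι₀ (n + N) v =
      orbitSum V ι₀ n v + (V ^ n) (orbitSum V ι₀ N fun j => v (n + j)) := by
  simp only [orbitSum, Finset.sum_range_add, map_sum, pow_add, mul_apply_eq_comp]

theorem orbitSum_congr {n : ℕ} {v v' : ℕ → H} (h : ∀ k < n, v k = v' k) :
    orbitSum V ι₀ n v = orbitSum V ι₀ n v' :=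
  Finset.sum_congr rfl fun k hk => by rw [h k (Finset.mem_range.1 hk)]

theorem orbitSum_eq_of_le {N M : ℕ} {v : ℕ → H} (hv : ∀ k, N ≤ k → v k = 0) (hNM : N ≤ M) :
    orbitSum V ι₀ M v = orbitSum V ι₀ N v :=
  (Finset.sum_subset (Finset.range_subset_range.2 hNM) fun k _ hk => by
    rw [hv k (by simpa using hk), map_zero, map_zero]).symm

theorem norm_orbitSum_add_sq (hV : adjoint V * V = 1) (n N : ℕ) (v : ℕ → H) :
    ‖orbitSum V ι₀ (n + N) v‖ ^ 2 = schurForm V ι₀ n v +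
      ‖(adjoint V ^ n) (orbitSum V ι₀ n v) + orbitSum V ι₀ N (fun j => v (n + j))‖ ^ 2 := by
  have hP : adjoint (V ^ n) * V ^ n = 1 := by rw [adjoint_pow, pow_mul_pow_eq_one n hV]
  rw [orbitSum_add, norm_add_apply_sq hP, adjoint_pow, schurForm]

theorem defectProj_adjoint_pow_orbitSum (hV : adjoint V * V = 1) {k n : ℕ} (hk : k < n)
    (v : ℕ → H) :
    defectProj V ((adjoint V ^ k) (orbitSum V ι₀ n v)) =
      ∑ j ∈ Finset.range (k + 1), woldCoeff V ι₀ (k - j) (v j) := by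
  have hD : ∀ j, defectProj V ((adjoint V ^ k) ((V ^ j) (ι₀ (v j)))) =
      if j < k + 1 then woldCoeff V ι₀ (k - j) (v j) else 0 := fun j => by
    simp only [woldCoeff, ← mul_apply_eq_comp, comp_apply]
    split_ifs with hj
    · rw [pow_mul_pow_of_mul_eq_one_of_ge hV (by omega)]
    · rw [pow_mul_pow_of_mul_eq_one_of_le hV (by omega), defectProj_mul_pow hV (by omega),
        zero_apply]
  rw [orbitSum, map_sum, map_sum, Finset.sum_congr rfl fun j _ => hD j, Finset.sum_ite,
    Finset.sum_const_zero, add_zero]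
  congr 1
  ext j
  simp only [Finset.mem_filter, Finset.mem_range]
  omega

theorem schurForm_eq_sum_woldCoeff (hV : adjoint V * V = 1) (n : ℕ) (v : ℕ → H) :
    schurForm V ι₀ n v =
      ∑ k ∈ Finset.range n, ‖∑ j ∈ Finset.range (k + 1), woldCoeff V ι₀ (k - j) (v j)‖ ^ 2 := by
  rw [schurForm, ← sum_norm_defectProj_adjoint_pow_sq hV]
  exact Finset.sum_congr rfl fun k hk => by
    rw [defectProj_adjoint_pow_orbitSum hV (Finset.mem_range.1 hk)]

theorem toepQF_eq_norm_orbitSum_sq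
    (hgram : ∀ (i j : ℕ) (x y : H), ⟪(V ^ j) (ι₀ x), (V ^ i) (ι₀ y)⟫_ℂ = ⟪Q (i - j) x, y⟫_ℂ)
    (N : ℕ) (v : ℕ → H) : toepQF Q N v = ‖orbitSum V ι₀ N v‖ ^ 2 := by
  simp only [orbitSum, norm_sum_sq_eq_sum_re_inner, hgram, toepQF]

theorem exists_norm_sub_orbitSum_lt (hdense : (orbitSpan V ι₀).topologicalClosure = ⊤)
    (z : K) {δ : ℝ} (hδ : 0 < δ) :
    ∃ (N : ℕ) (e : ℕ → H), (∀ k, N ≤ k → e k = 0) ∧ ‖z - orbitSum V ι₀ N e‖ < δ := by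
  have hz : z ∈ closure (Set.range (Finsupp.lsum ℂ fun j => ((V ^ j).comp ι₀ : H →ₗ[ℂ] K))) := by
    rw [← LinearMap.coe_range, ← Submodule.topologicalClosure_coe,
      topologicalClosure_range_lsum_eq_top (fun j => (V ^ j).comp ι₀) hdense]
    trivial
  obtain ⟨_, ⟨f, rfl⟩, hf⟩ := Metric.mem_closure_iff.1 hz δ hδ
  obtain ⟨N, hN⟩ := Finset.exists_nat_subset_range f.support
  refine ⟨N, f, fun k hk => Finsupp.notMem_support_iff.1 fun h => ?_, ?_⟩
  · exact absurd (Finset.mem_range.1 (hN h)) (by omega)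
  · rwa [dist_eq_norm, Finsupp.lsum_apply, Finsupp.sum_of_support_subset f hN _ (by simp)] at hf

theorem woldCoeff_mem_topologicalClosure (hV : adjoint V * V = 1)
    (hdense : (orbitSpan V ι₀).topologicalClosure = ⊤) (r : ℕ) (x : H) :
    woldCoeff V ι₀ r x ∈ (LinearMap.range (woldCoeff V ι₀ 0 : H →ₗ[ℂ] K)).topologicalClosure := by
  set T := (LinearMap.range (woldCoeff V ι₀ 0 : H →ₗ[ℂ] K)).topologicalClosure
  have hgen : orbitSpan V ι₀ ≤ T.comap (defectProj V : K →ₗ[ℂ] K) := by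
    refine Submodule.span_le.2 ?_
    rintro _ ⟨j, x, rfl⟩
    rcases Nat.eq_zero_or_pos j with rfl | hj
    · exact Submodule.le_topologicalClosure _ ⟨x, by simp [woldCoeff]⟩
    · show defectProj V ((V ^ j) (ι₀ x)) ∈ T
      rw [← mul_apply_eq_comp, defectProj_mul_pow hV hj.ne', zero_apply]
      exact T.zero_mem
  have hclosed : IsClosed (T.comap (defectProj V : K →ₗ[ℂ] K) : Set K) :=
    (Submodule.isClosed_topologicalClosure _).preimage (defectProj V).continuous
  have := Submodule.topologicalClosure_minimal _ hgen hclosed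
  rw [hdense] at this
  exact this (Submodule.mem_top (x := (adjoint V ^ r) (ι₀ x)))

theorem schurForm_le_toepQF (hV : adjoint V * V = 1)
    (hgram : ∀ (i j : ℕ) (x y : H), ⟪(V ^ j) (ι₀ x), (V ^ i) (ι₀ y)⟫_ℂ = ⟪Q (i - j) x, y⟫_ℂ)
    (n : ℕ) {N : ℕ} {v : ℕ → H} (hv : ∀ k, N ≤ k → v k = 0) :
    schurForm V ι₀ n v ≤ toepQF Q N v := by
  rw [toepQF_eq_norm_orbitSum_sq hgram, ← orbitSum_eq_of_le hv (Nat.le_add_left N n),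
    norm_orbitSum_add_sq hV]
  exact le_add_of_nonneg_right (sq_nonneg _)

/-- By density, the tail `y` of a test vector can make the slack `‖V†^{m+1} u + y‖²` of
`norm_orbitSum_add_sq` arbitrarily small. -/
theorem schurQF_le_schurForm (hV : adjoint V * V = 1)
    (hgram : ∀ (i j : ℕ) (x y : H), ⟪(V ^ j) (ι₀ x), (V ^ i) (ι₀ y)⟫_ℂ = ⟪Q (i - j) x, y⟫_ℂ)
    (hdense : (orbitSpan V ι₀).topologicalClosure = ⊤) {m : ℕ} {X : ℕ → ℕ → H →L[ℂ] H}
    (hX : ∀ N (v : ℕ → H), (∀ k, N ≤ k → v k = 0) → schurQF m X v ≤ toepQF Q N v)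
    (v : ℕ → H) : schurQF m X v ≤ schurForm V ι₀ (m + 1) v := by
  refine le_of_forall_pos_le_add fun ε hε => ?_
  obtain ⟨N, e, he, hte⟩ := exists_norm_sub_orbitSum_lt hdense
    (-(adjoint V ^ (m + 1)) (orbitSum V ι₀ (m + 1) v)) (Real.sqrt_pos.2 hε)
  let w : ℕ → H := fun k => if k < m + 1 then v k else e (k - (m + 1))
  have hwv : ∀ k < m + 1, w k = v k := fun k hk => if_pos hk
  have hwe : (fun j => w (m + 1 + j)) = e := funext fun j => by
    simp only [w, if_neg (show ¬m + 1 + j < m + 1 by omega), Nat.add_sub_cancel_left]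
  have hw : ∀ k, m + 1 + N ≤ k → w k = 0 := fun k hk => by
    simp only [w, if_neg (show ¬k < m + 1 by omega)]
    exact he _ (by omega)
  have hsmall :
      ‖(adjoint V ^ (m + 1)) (orbitSum V ι₀ (m + 1) v) + orbitSum V ι₀ N e‖ ^ 2 < ε := by
    rw [← norm_neg, neg_add', ← Real.lt_sqrt (norm_nonneg _)]
    exact hte
  have := hX _ w hw
  rw [schurQF_congr X fun k hk => hwv k (by omega), toepQF_eq_norm_orbitSum_sq hgram,
    norm_orbitSum_add_sq hV, hwe] at this
  simp only [schurForm, orbitSum_congr hwv] at this ⊢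
  linarith

/-- The Wold coefficients are moved into `H` by a partial isometry `U` that is isometric on
`closure (ran G₀) ⊇ ran (1 - V V†)`; it exists because `|G₀|` has the same norms as `G₀`. -/
theorem exists_lowerToeplitz_factor (hV : adjoint V * V = 1)
    (hdense : (orbitSpan V ι₀).topologicalClosure = ⊤) :
    ∃ F : ℕ → H →L[ℂ] H, (∀ i, Set.range (F i) ⊆ closure (Set.range (F 0))) ∧
      ∀ m v, schurQF m (lowerToeplitzGram F m) v = schurForm V ι₀ (m + 1) v := by
  let A := woldCoeff V ι₀ 0
  obtain ⟨U, -, hU⟩ := exists_comp_eq_of_norm_eq (A : H →ₗ[ℂ] K)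
    ((CFC.sqrt (adjoint A ∘L A) : H →L[ℂ] H) : H →ₗ[ℂ] H)
    fun x => (norm_sqrt_adjoint_comp_self_apply A x).symm
  have hmem := woldCoeff_mem_topologicalClosure hV hdense
  refine ⟨fun r => U ∘L woldCoeff V ι₀ r, fun i => ?_, fun m v => ?_⟩
  · rintro _ ⟨x, rfl⟩
    have h := hmem i x
    rw [← SetLike.mem_coe, Submodule.topologicalClosure_coe, LinearMap.coe_range] at h
    have := image_closure_subset_closure_image U.continuous ⟨_, h, rfl⟩
    rwa [← Set.range_comp] at this
  · rw [schurQF_lowerToeplitzGram, schurForm_eq_sum_woldCoeff hV]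
    refine Finset.sum_congr rfl fun k _ => ?_
    simp only [comp_apply, ← map_sum]
    rw [hU _ (Submodule.sum_mem _ fun j _ => hmem _ _)]

theorem exists_stationary_cholesky_of_dilation (hV : adjoint V * V = 1)
    (hgram : ∀ (i j : ℕ) (x y : H), ⟪(V ^ j) (ι₀ x), (V ^ i) (ι₀ y)⟫_ℂ = ⟪Q (i - j) x, y⟫_ℂ)
    (hdense : (orbitSpan V ι₀).topologicalClosure = ⊤) :
    ∃ F : ℕ → H →L[ℂ] H, (∀ i, Set.range (F i) ⊆ closure (Set.range (F 0))) ∧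
      ∀ m, IsSchurToep Q m (lowerToeplitzGram F m) := by
  obtain ⟨F, hrange, hF⟩ := exists_lowerToeplitz_factor hV hdense
  refine ⟨F, hrange, fun m => ⟨fun i j hij => if_neg (by omega), adjoint_lowerToeplitzGram F m,
    fun v => ?_, fun N v hv => ?_, fun X _ _ _ hX v => ?_⟩⟩
  · rw [schurQF_lowerToeplitzGram]
    positivity
  · exact hF m v ▸ schurForm_le_toepQF hV hgram (m + 1) hv
  · exact hF m v ▸ schurQF_le_schurForm hV hgram hdense hX v

end Dilation

section ToeplitzKernel

def toeplitzKernel (Q : ℤ → H →L[ℂ] H) : Matrix ℕ ℕ (H →L[ℂ] H) := Matrix.of fun i j => Q (i - j)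

theorem ToepPos.posSemidef_toeplitzKernel {Q : ℤ → H →L[ℂ] H} (hQ : ToepPos Q) :
    (toeplitzKernel Q).PosSemidef := by
  have htfae := (RKHS.posSemidef_tfae (K := toeplitzKernel Q)).out 0 2
  refine htfae.2 ⟨Matrix.IsHermitian.ext fun i j => ?_, fun f => ?_⟩
  · simp [toeplitzKernel, star_eq_adjoint, ← hQ.1]
  · obtain ⟨N, hN⟩ := Finset.exists_nat_subset_range f.support
    have := hQ.2 N f
    rw [toepQF, Finset.sum_comm] at this
    simpa [Finsupp.sum_of_support_subset f hN, toeplitzKernel, Complex.re_sum] using this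

variable (Q : ℤ → H →L[ℂ] H) [Fact (toeplitzKernel Q).PosSemidef]

theorem inner_kerFun_toeplitzKernel (i j : ℕ) (x y : H) :
    ⟪RKHS.kerFun (RKHS.OfKernel (toeplitzKernel Q)) j x,
      RKHS.kerFun (RKHS.OfKernel (toeplitzKernel Q)) i y⟫_ℂ = ⟪Q (i - j) x, y⟫_ℂ := by
  rw [← RKHS.kernel_inner, RKHS.OfKernel.kernel_ofKernel]
  rfl

theorem exists_shift_kerFun :
    ∃ V : RKHS.OfKernel (toeplitzKernel Q) →L[ℂ] RKHS.OfKernel (toeplitzKernel Q),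
      adjoint V * V = 1 ∧ ∀ j, RKHS.kerFun (RKHS.OfKernel (toeplitzKernel Q)) j =
        (V ^ j).comp (RKHS.kerFun (RKHS.OfKernel (toeplitzKernel Q)) 0) := by
  set k := RKHS.kerFun (RKHS.OfKernel (toeplitzKernel Q))
  let A := Finsupp.lsum ℂ fun j => (k j : H →ₗ[ℂ] RKHS.OfKernel (toeplitzKernel Q))
  let B := Finsupp.lsum ℂ fun j => (k (j + 1) : H →ₗ[ℂ] RKHS.OfKernel (toeplitzKernel Q))
  obtain ⟨V, hAB, hV⟩ := exists_comp_eq_of_norm_eq A B <| norm_lsum_eq_of_inner_eq _ _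
    fun i j x y => by simp only [k, inner_kerFun_toeplitzKernel]; push_cast; ring_nf
  have hA : (LinearMap.range A).topologicalClosure = ⊤ :=
    topologicalClosure_range_lsum_eq_top k (RKHS.kerFun_dense _)
  have hstep : ∀ j, V.comp (k j) = k (j + 1) := fun j => ext fun x => by
    simpa [A, B] using hAB (Finsupp.single j x)
  refine ⟨V, (norm_map_iff_adjoint_comp_self V).1 fun z => hV z (hA ▸ Submodule.mem_top),
    fun j => ?_⟩
  induction j with
  | zero => rw [pow_zero, one_def, id_comp]
  | succ j ih => rw [← hstep, ih, pow_succ', mul_def, comp_assoc]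

end ToeplitzKernel

theorem schur_toeplitz_stationary_cholesky (Q : ℤ → H →L[ℂ] H) (hQ : ToepPos Q) :
    ∃ F : ℕ → H →L[ℂ] H,
      (∀ i, Set.range (F i) ⊆ closure (Set.range (F 0))) ∧
      ∀ m : ℕ, IsSchurToep Q m
        (fun i j => if i ≤ m ∧ j ≤ m then
          ∑ k ∈ Finset.Icc (max i j) m, (F (k - i)).adjoint ∘L (F (k - j))
        else 0) := by
  have : Fact (toeplitzKernel Q).PosSemidef := ⟨hQ.posSemidef_toeplitzKernel⟩
  obtain ⟨V, hV, hkerFun⟩ := exists_shift_kerFun Q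
  refine exists_stationary_cholesky_of_dilation (ι₀ := RKHS.kerFun _ 0) hV (fun i j x y => ?_) ?_
  · rw [← comp_apply, ← comp_apply, ← hkerFun, ← hkerFun, inner_kerFun_toeplitzKernel]
  · simpa only [orbitSpan, ← comp_apply, ← hkerFun] using RKHS.kerFun_dense _

end
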